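/- arXiv:0709.2670 — 7 statements merged into one kernel-verified Lean document; each statement's English description precedes it below -/
import Mathlib

section
/- If (g,≺) is a maximally delayed causal flow of an open graph (G,I,O), then the set of maximal elements of V with respect to ≺ equals O, i.e., V₀^≺ = O. -/
open Set

variable {V : Type*}

def oddN (G : SimpleGraph V) (K : Set V) : Set V :=
  {u | Odd {v | v ∈ K ∧ G.Adj u v}.ncard}

def IsSPO (lt : V → V → Prop) : Prop :=
  (∀ a, ¬ lt a a) ∧ (∀ a b c, lt a b → lt b c → lt a c)

def IsCausalFlow (G : SimpleGraph V) (I O : Set V) (g : V → V) (lt : V → V → Prop) : Prop :=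
  IsSPO lt ∧ (∀ i, i ∉ O → g i ∉ I) ∧ (∀ i, i ∉ O → lt i (g i)) ∧
  (∀ i, i ∉ O → ∀ j, G.Adj (g i) j → j = i ∨ lt i j) ∧
  (∀ i, i ∉ O → G.Adj (g i) i)

def IsGFlow (G : SimpleGraph V) (I O : Set V) (g : V → Set V) (lt : V → V → Prop) : Prop :=
  IsSPO lt ∧ (∀ i, i ∉ O → (g i).Nonempty ∧ g i ∩ I = ∅) ∧
  (∀ i, i ∉ O → ∀ j ∈ g i, lt i j) ∧
  (∀ i, i ∉ O → ∀ j ∈ oddN G (g i), j = i ∨ lt i j) ∧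
  (∀ i, i ∉ O → i ∈ oddN G (g i))

def maxSet (lt : V → V → Prop) (X : Set V) : Set V :=
  {u ∈ X | ∀ v ∈ X, ¬ lt u v}

def rest (lt : V → V → Prop) : ℕ → Set V
  | 0 => Set.univ
  | k+1 => rest lt k \ maxSet lt (rest lt k)

def layer (lt : V → V → Prop) (k : ℕ) : Set V := maxSet lt (rest lt k)

def cumul (lt : V → V → Prop) (k : ℕ) : Set V := Set.univ \ rest lt (k+1)

def MoreDelayed (lt lt' : V → V → Prop) : Prop :=
  (∀ k, (cumul lt' k).ncard ≤ (cumul lt k).ncard) ∧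
  ∃ k, (cumul lt' k).ncard < (cumul lt k).ncard

noncomputable def flowDepth (lt : V → V → Prop) : ℕ := sInf {d | layer lt (d+1) = ∅}

def MaxDelayedCausalFlow (G : SimpleGraph V) (I O : Set V) (g : V → V) (lt : V → V → Prop) : Prop :=
  IsCausalFlow G I O g lt ∧
  ∀ g' lt', IsCausalFlow G I O g' lt' → ¬ MoreDelayed lt' lt

def MaxDelayedGFlow (G : SimpleGraph V) (I O : Set V) (g : V → Set V) (lt : V → V → Prop) : Prop :=
  IsGFlow G I O g lt ∧
  ∀ g' lt', IsGFlow G I O g' lt' → ¬ MoreDelayed lt' lt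


lemma rest_restrict_subset {V : Type*} (lt : V → V → Prop) (O : Set V) :
    ∀ k, rest (fun a b => lt a b ∧ a ∉ O) k ⊆ rest lt k := by
  intro k
  induction k with
  | zero => exact fun x hx => hx
  | succ k ih =>
    rintro x ⟨hx1, hx2⟩
    refine ⟨ih hx1, fun hmax => hx2 ?_⟩
    exact ⟨hx1, fun v hv hlt => hmax.2 v (ih hv) hlt.1⟩

theorem max_delayed_causal_layer_zero {V : Type*} [Fintype V] (G : SimpleGraph V)
    (I O : Set V) (g : V → V) (lt : V → V → Prop)
    (h : MaxDelayedCausalFlow G I O g lt) :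
    layer lt 0 = O := by
  obtain ⟨hcf, hmax⟩ := h
  obtain ⟨⟨hirr, htrans⟩, hgI, hglt, hadj, hgadj⟩ := hcf
  ext u
  constructor
  · rintro ⟨-, hm⟩
    by_contra huO
    exact hm (g u) (Set.mem_univ _) (hglt u huO)
  · intro huO
    refine ⟨Set.mem_univ u, fun v _ hlt => ?_⟩
    set lt' : V → V → Prop := fun a b => lt a b ∧ a ∉ O with hlt'def
    have hflow' : IsCausalFlow G I O g lt' := by
      refine ⟨⟨fun a ha => hirr a ha.1,
        fun a b c h1 h2 => ⟨htrans a b c h1.1 h2.1, h1.2⟩⟩,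
        hgI, fun i hi => ⟨hglt i hi, hi⟩, fun i hi j hj => ?_, hgadj⟩
      rcases hadj i hi j hj with h | h
      · exact Or.inl h
      · exact Or.inr ⟨h, hi⟩
    refine hmax g lt' hflow' ?_
    have hsub : ∀ k, rest lt' k ⊆ rest lt k := rest_restrict_subset lt O
    have hcsub : ∀ k, cumul lt k ⊆ cumul lt' k := by
      intro k x hx
      exact ⟨hx.1, fun hm => hx.2 (hsub (k+1) hm)⟩
    constructor
    · intro k
      exact Set.ncard_le_ncard (hcsub k) (Set.toFinite _)
    · refine ⟨0, Set.ncard_lt_ncard ?_ (Set.toFinite _)⟩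
      refine (Set.ssubset_iff_of_subset (hcsub 0)).2 ⟨u, ?_, ?_⟩
      · -- u ∈ cumul lt' 0 : u is maximal for lt' (since u ∈ O)
        refine ⟨Set.mem_univ u, fun hm => ?_⟩
        exact hm.2 ⟨Set.mem_univ u, fun w _ hw => hw.2 huO⟩
      · -- u ∉ cumul lt 0 : u is not maximal for lt
        intro hm
        exact hm.2 ⟨Set.mem_univ u, fun hmax => hmax.2 v (Set.mem_univ v) hlt⟩
end

section
/- If (g,≺) is a maximally delayed gflow of an open graph (G,I,O), then the set of ≺-maximal vertices equals O, i.e., V₀^≺ = O. -/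
open Set

variable {V : Type*}

lemma rest_mono {V : Type*} {lt lt' : V → V → Prop} (h : ∀ a b, lt' a b → lt a b) :
    ∀ k, rest lt' k ⊆ rest lt k
  | 0 => subset_rfl
  | (k+1) => by
    intro x hx
    obtain ⟨hx1, hx2⟩ := hx
    have hx1' := rest_mono h k hx1
    refine ⟨hx1', fun hm => ?_⟩
    simp only [maxSet, Set.mem_setOf_eq, not_and, not_forall, not_not] at hx2
    obtain ⟨v, hv, hvlt⟩ := hx2 hx1
    exact hm.2 v (rest_mono h k hv) (h _ _ hvlt)

theorem max_delayed_gflow_layer_zero {V : Type*} [Fintype V] (G : SimpleGraph V)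
    (I O : Set V) (g : V → Set V) (lt : V → V → Prop)
    (h : MaxDelayedGFlow G I O g lt) :
    layer lt 0 = O := by
  obtain ⟨⟨⟨hirr, htrans⟩, hne, hltg, hodd, hin⟩, hmax⟩ := h
  ext u
  simp only [layer, maxSet, rest, Set.mem_setOf_eq, Set.mem_univ, true_and]
  constructor
  · intro hu
    by_contra huO
    obtain ⟨⟨j, hj⟩, -⟩ := hne u huO
    exact hu j trivial (hltg u huO j hj)
  · intro huO
    refine fun v _ hv => ?_
    set lt' : V → V → Prop := fun a b => lt a b ∧ a ≠ u with hlt'def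
    have hsub : ∀ a b, lt' a b → lt a b := fun a b hab => hab.1
    have hgf' : IsGFlow G I O g lt' := by
      refine ⟨⟨fun a ha => hirr a ha.1, fun a b c hab hbc => ⟨htrans a b c hab.1 hbc.1, hab.2⟩⟩,
        hne, fun i hi j hj => ⟨hltg i hi j hj, fun he => hi (he ▸ huO)⟩,
        fun i hi j hj => ?_, hin⟩
      rcases hodd i hi j hj with h1 | h2
      · exact Or.inl h1
      · exact Or.inr ⟨h2, fun he => hi (he ▸ huO)⟩
    refine hmax g lt' hgf' ⟨fun k => ?_, 0, ?_⟩
    · exact Set.ncard_le_ncard (Set.diff_subset_diff_right (rest_mono hsub (k+1)))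
        (Set.toFinite _)
    · apply Set.ncard_lt_ncard _ (Set.toFinite _)
      refine ⟨Set.diff_subset_diff_right (rest_mono hsub 1), fun hsub2 => ?_⟩
      have hu1 : u ∈ cumul lt' 0 := by
        refine ⟨trivial, fun hr => ?_⟩
        exact hr.2 ⟨hr.1, fun w _ hw => hw.2 rfl⟩
      have hu2 : u ∈ cumul lt 0 := hsub2 hu1
      exact hu2.2 ⟨trivial, fun hm => hm.2 v trivial hv⟩
end

section
/- If (g,≺) is a maximally delayed gflow of (G,I,O), then the second layer satisfies V₁^≺ = { u ∈ V∖O : ∃K ⊆ O∖I, Odd(K) ∩ (V∖O) = {u} }. -/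
open Set

variable {V : Type*}

/-!
A strict partial order can be re-layered by any rank function `r` (`a ≺ b ↔ r b < r a`). If a
gflow survives lowering the rank of some vertex below its layer index, the result is more delayed;
so in a maximally delayed gflow no vertex can be moved to a lower layer. Outputs impose no
constraint and can always be moved to layer `0`. A non-output `u` can be moved to layer `1`, with
correction set `K`, exactly when `K ⊆ O ∖ I` and `Odd(K) ∖ O = {u}`; conversely, if `u` already lies
in layer `1`, then `K = g u` is such a set because everything above `u` lies in layer `0 = O`.
-/

section Layers

variable {lt : V → V → Prop}

theorem rest_antitone : Antitone (rest lt) :=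
  antitone_nat_of_succ_le fun _ => sdiff_subset

theorem layer_eq_rest_diff (k : ℕ) : layer lt k = rest lt k \ rest lt (k + 1) :=
  (sdiff_sdiff_cancel_left fun _ hv => hv.1).symm

theorem IsSPO.maxSet_nonempty [Finite V] (h : IsSPO lt) {X : Set V} (hX : X.Nonempty) :
    (maxSet lt X).Nonempty := by
  have : IsTrans V (Function.swap lt) := ⟨fun a b c hab hbc => h.2 _ _ _ hbc hab⟩
  have : Std.Irrefl (Function.swap lt) := ⟨h.1⟩
  obtain ⟨a, haX, hmin⟩ :=
    (Finite.wellFounded_of_trans_of_irrefl (Function.swap lt)).has_min X hX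
  exact ⟨a, haX, hmin⟩

theorem IsSPO.ncard_rest_le [Finite V] (h : IsSPO lt) (k : ℕ) :
    (rest lt k).ncard ≤ Nat.card V - k := by
  induction k with
  | zero => simp [rest]
  | succ k ih =>
    rcases (rest lt k).eq_empty_or_nonempty with hk | hk
    · simp [rest, hk]
    · have hlt : (rest lt (k + 1)).ncard < (rest lt k).ncard :=
        ncard_lt_ncard (LE.le.sdiff_ssubset_of_nonempty (fun _ hv => hv.1)
          (h.maxSet_nonempty hk))
      omega

theorem IsSPO.rest_card_eq_empty [Finite V] (h : IsSPO lt) : rest lt (Nat.card V) = ∅ :=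
  (ncard_eq_zero).mp (by simpa using h.ncard_rest_le (Nat.card V))

/-- The index `k` of the layer `V_k` containing `v`. -/
noncomputable def layerIndex (lt : V → V → Prop) (v : V) : ℕ := sInf {k | v ∉ rest lt (k + 1)}

theorem IsSPO.mem_rest_iff [Finite V] (h : IsSPO lt) {v : V} {k : ℕ} :
    v ∈ rest lt k ↔ k ≤ layerIndex lt v := by
  have hleaves : v ∉ rest lt (layerIndex lt v + 1) := by
    refine Nat.sInf_mem (s := {k | v ∉ rest lt (k + 1)}) ⟨Nat.card V, fun hv => ?_⟩
    simpa [h.rest_card_eq_empty] using rest_antitone (Nat.le_succ (Nat.card V)) hv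
  constructor
  · intro hv
    by_contra! hk
    exact hleaves (rest_antitone hk hv)
  · intro hk
    cases k with
    | zero => exact mem_univ v
    | succ m => exact not_not.mp (Nat.notMem_of_lt_sInf hk)

theorem IsSPO.mem_layer_iff [Finite V] (h : IsSPO lt) {v : V} {k : ℕ} :
    v ∈ layer lt k ↔ layerIndex lt v = k := by
  rw [layer_eq_rest_diff, mem_sdiff, h.mem_rest_iff, h.mem_rest_iff]
  omega

theorem IsSPO.mem_cumul_iff [Finite V] (h : IsSPO lt) {v : V} {k : ℕ} :
    v ∈ cumul lt k ↔ layerIndex lt v ≤ k := by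
  simp only [cumul, mem_sdiff, mem_univ, true_and, h.mem_rest_iff]
  omega

theorem IsSPO.layerIndex_lt_of_lt [Finite V] (h : IsSPO lt) {v w : V} (hvw : lt v w) :
    layerIndex lt w < layerIndex lt v := by
  by_contra! hle
  exact (h.mem_layer_iff.mpr rfl).2 w (h.mem_rest_iff.mpr hle) hvw

end Layers

section RankOrder

def rankOrder (r : V → ℕ) (a b : V) : Prop := r b < r a

theorem isSPO_rankOrder (r : V → ℕ) : IsSPO (rankOrder r) :=
  ⟨fun _ => lt_irrefl _, fun _ _ _ hab hbc => lt_trans hbc hab⟩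

theorem le_of_mem_rest_rankOrder (r : V → ℕ) {k : ℕ} {v : V} (hv : v ∈ rest (rankOrder r) k) :
    k ≤ r v := by
  induction k generalizing v with
  | zero => exact Nat.zero_le _
  | succ k ih =>
    by_contra! hvk
    exact hv.2 ⟨hv.1, fun w hw hvw => by have := ih hw; unfold rankOrder at hvw; omega⟩

theorem mem_cumul_rankOrder (r : V → ℕ) {k : ℕ} {v : V} (hv : r v ≤ k) :
    v ∈ cumul (rankOrder r) k :=
  ⟨mem_univ v, fun hmem => by have := le_of_mem_rest_rankOrder r hmem; omega⟩

theorem IsSPO.moreDelayed_rankOrder [Finite V] {lt : V → V → Prop} (h : IsSPO lt) {r : V → ℕ}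
    (hr : ∀ v, r v ≤ layerIndex lt v) {u : V} (hu : r u < layerIndex lt u) :
    MoreDelayed (rankOrder r) lt := by
  have hsub : ∀ k, cumul lt k ⊆ cumul (rankOrder r) k := fun k v hv =>
    mem_cumul_rankOrder r ((hr v).trans (h.mem_cumul_iff.mp hv))
  refine ⟨fun k => ncard_le_ncard (hsub k), r u, ncard_lt_ncard ?_⟩
  refine (ssubset_iff_of_subset (hsub _)).mpr ⟨u, mem_cumul_rankOrder r le_rfl, fun hmem => ?_⟩
  have := h.mem_cumul_iff.mp hmem
  omega

end RankOrder

section GFlow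

variable {G : SimpleGraph V} {I O : Set V} {lt lt' : V → V → Prop}

def GFlowAt (G : SimpleGraph V) (I : Set V) (lt : V → V → Prop) (i : V) (S : Set V) : Prop :=
  (S.Nonempty ∧ S ∩ I = ∅) ∧ (∀ j ∈ S, lt i j) ∧ (∀ j ∈ oddN G S, j = i ∨ lt i j) ∧
    i ∈ oddN G S

theorem isGFlow_iff_gFlowAt {g : V → Set V} :
    IsGFlow G I O g lt ↔ IsSPO lt ∧ ∀ i ∉ O, GFlowAt G I lt i (g i) :=
  ⟨fun ⟨hspo, h₁, h₂, h₃, h₄⟩ => ⟨hspo, fun i hi => ⟨h₁ i hi, h₂ i hi, h₃ i hi, h₄ i hi⟩⟩,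
    fun ⟨hspo, h⟩ => ⟨hspo, fun i hi => (h i hi).1, fun i hi => (h i hi).2.1,
      fun i hi => (h i hi).2.2.1, fun i hi => (h i hi).2.2.2⟩⟩

theorem GFlowAt.mono {i : V} {S : Set V} (hS : GFlowAt G I lt i S)
    (hlt : ∀ j, lt i j → lt' i j) : GFlowAt G I lt' i S :=
  ⟨hS.1, fun j hj => hlt j (hS.2.1 j hj),
    fun j hj => (hS.2.2.1 j hj).imp_right (hlt j), hS.2.2.2⟩

theorem GFlowAt.toRankOrder [Finite V] (hlt : IsSPO lt) {i : V} {S : Set V}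
    (hS : GFlowAt G I lt i S) {r : V → ℕ} (hr : ∀ v, r v ≤ layerIndex lt v)
    (hi : r i = layerIndex lt i) : GFlowAt G I (rankOrder r) i S :=
  hS.mono fun j hij => by
    have := hlt.layerIndex_lt_of_lt hij
    have := hr j
    unfold rankOrder
    omega

theorem nonempty_of_mem_oddN {S : Set V} {u : V} (hu : u ∈ oddN G S) : S.Nonempty :=
  (nonempty_of_ncard_ne_zero hu.pos.ne').mono fun _ hv => hv.1

theorem gFlowAt_iff_of_lt_iff {u : V} {S : Set V} (hu : u ∉ O) (hlt : ∀ j, lt u j ↔ j ∈ O) :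
    GFlowAt G I lt u S ↔ S ⊆ O \ I ∧ oddN G S ∩ Oᶜ = {u} := by
  constructor
  · rintro ⟨⟨-, hSI⟩, hS, hodd, hu_odd⟩
    refine ⟨fun j hj => ⟨(hlt j).mp (hS j hj), fun hjI => hSI.subset ⟨hj, hjI⟩⟩, ?_⟩
    refine Subset.antisymm (fun j ⟨hj, hjO⟩ => ?_) (singleton_subset_iff.mpr ⟨hu_odd, hu⟩)
    exact (hodd j hj).resolve_right fun hj' => hjO ((hlt j).mp hj')
  · rintro ⟨hSO, hodd⟩
    have hu_odd : u ∈ oddN G S := (hodd.symm.subset rfl).1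
    refine ⟨⟨nonempty_of_mem_oddN hu_odd, ?_⟩, fun j hj => (hlt j).mpr (hSO hj).1, ?_, hu_odd⟩
    · exact eq_empty_of_forall_notMem fun j hj => (hSO hj.1).2 hj.2
    · intro j hj
      by_cases hjO : j ∈ O
      · exact Or.inr ((hlt j).mpr hjO)
      · exact Or.inl (hodd.subset ⟨hj, hjO⟩)

theorem IsGFlow.layerIndex_ne_zero [Finite V] {g : V → Set V} (h : IsGFlow G I O g lt)
    {i : V} (hi : i ∉ O) : layerIndex lt i ≠ 0 := by
  obtain ⟨j, hj⟩ := (h.2.1 i hi).1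
  have := h.1.layerIndex_lt_of_lt (h.2.2.1 i hi j hj)
  omega

variable {g : V → Set V}

theorem MaxDelayedGFlow.eq_layerIndex_of_le [Finite V] (h : MaxDelayedGFlow G I O g lt)
    {g' : V → Set V} {r : V → ℕ} (hr : ∀ v, r v ≤ layerIndex lt v)
    (hg' : ∀ i ∉ O, GFlowAt G I (rankOrder r) i (g' i)) (v : V) : r v = layerIndex lt v := by
  by_contra hv
  exact h.2 g' _ (isGFlow_iff_gFlowAt.mpr ⟨isSPO_rankOrder r, hg'⟩)
    (h.1.1.moreDelayed_rankOrder hr (lt_of_le_of_ne (hr v) hv))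

theorem MaxDelayedGFlow.layerIndex_eq_zero_iff [Finite V] (h : MaxDelayedGFlow G I O g lt)
    {v : V} : layerIndex lt v = 0 ↔ v ∈ O := by
  classical
  refine ⟨fun hv => by_contra fun hvO => h.1.layerIndex_ne_zero hvO hv, fun hvO => ?_⟩
  let r : V → ℕ := fun w => if w ∈ O then 0 else layerIndex lt w
  have hr : ∀ w, r w ≤ layerIndex lt w := fun w => by
    simp only [r]; split <;> omega
  have hg : ∀ i ∉ O, GFlowAt G I (rankOrder r) i (g i) := fun i hi =>
    ((isGFlow_iff_gFlowAt.mp h.1).2 i hi).toRankOrder h.1.1 hr (if_neg hi)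
  simpa [r, hvO] using (h.eq_layerIndex_of_le hr hg v).symm

theorem MaxDelayedGFlow.layerIndex_eq_one_iff [Finite V] (h : MaxDelayedGFlow G I O g lt)
    {u : V} : layerIndex lt u = 1 ↔ u ∉ O ∧ ∃ K ⊆ O \ I, oddN G K ∩ Oᶜ = {u} := by
  classical
  have hgflow := (isGFlow_iff_gFlowAt.mp h.1).2
  constructor
  · intro hu
    have huO : u ∉ O := fun hO => by simp [h.layerIndex_eq_zero_iff.mpr hO] at hu
    have hlt : ∀ j, rankOrder (layerIndex lt) u j ↔ j ∈ O := fun j => by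
      rw [rankOrder, hu, Nat.lt_one_iff, h.layerIndex_eq_zero_iff]
    exact ⟨huO, g u,
      (gFlowAt_iff_of_lt_iff huO hlt).mp ((hgflow u huO).toRankOrder h.1.1 (fun _ => le_rfl) rfl)⟩
  · rintro ⟨huO, K, hKO, hK⟩
    by_contra hu
    have hu_pos := h.1.layerIndex_ne_zero huO
    let r := Function.update (layerIndex lt) u 1
    have hr : ∀ v, r v ≤ layerIndex lt v := fun v => by
      rcases eq_or_ne v u with rfl | hv
      · simp only [r, Function.update_self]; omega
      · simp [r, hv]
    have hlt : ∀ j, rankOrder r u j ↔ j ∈ O := fun j => by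
      rcases eq_or_ne j u with rfl | hj
      · simp [rankOrder, huO]
      · simp [rankOrder, r, hj, h.layerIndex_eq_zero_iff]
    have hg : ∀ i ∉ O, GFlowAt G I (rankOrder r) i (Function.update g u K i) := fun i hi => by
      rcases eq_or_ne i u with rfl | hiu
      · simpa using (gFlowAt_iff_of_lt_iff hi hlt).mpr ⟨hKO, hK⟩
      · simpa [hiu] using (hgflow i hi).toRankOrder h.1.1 hr (by simp [r, hiu])
    exact hu (by simpa [r] using (h.eq_layerIndex_of_le hr hg u).symm)

end GFlow

theorem max_delayed_gflow_layer_one {V : Type*} [Fintype V] (G : SimpleGraph V)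
    (I O : Set V) (g : V → Set V) (lt : V → V → Prop)
    (h : MaxDelayedGFlow G I O g lt) :
    layer lt 1 = {u | u ∉ O ∧ ∃ K ⊆ O \ I, oddN G K ∩ Oᶜ = {u}} := by
  ext u
  exact h.1.1.mem_layer_iff.trans h.layerIndex_eq_one_iff
end

section
/- If (g,≺) is a maximally delayed causal flow of (G,I,O), then the pair (g̃, ≺̃), where g̃ is the restriction of g to V ∖ (V₀^≺ ∪ V₁^≺) and ≺̃ is ≺ with all pairs in V₁^≺ × V₀^≺ removed, is a maximally delayed causal flow of the open graph (G, I, O ∪ V₁^≺). -/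
open Set

variable {V : Type*}

lemma mem_maxSet {lt : V → V → Prop} {X : Set V} {u : V} :
    u ∈ maxSet lt X ↔ u ∈ X ∧ ∀ v ∈ X, ¬ lt u v := Iff.rfl

lemma maxSet_eq_of_iff {lt₁ lt₂ : V → V → Prop} {S : Set V}
    (h : ∀ u ∈ S, ∀ v ∈ S, (lt₁ u v ↔ lt₂ u v)) : maxSet lt₁ S = maxSet lt₂ S := by
  ext u
  simp only [mem_maxSet]
  exact and_congr_right fun hu => forall₂_congr fun v hv => not_congr (h u hu v hv)

lemma rest_one (lt : V → V → Prop) : rest lt 1 = Set.univ \ layer lt 0 := rfl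

lemma rest_succ_subset (lt : V → V → Prop) (k : ℕ) : rest lt (k+1) ⊆ rest lt k :=
  Set.diff_subset

lemma rest_subset_of_le (lt : V → V → Prop) {j k : ℕ} (h : j ≤ k) : rest lt k ⊆ rest lt j := by
  induction h with
  | refl => exact subset_rfl
  | step _ ih => exact (rest_succ_subset lt _).trans ih

lemma maxSet_restr_univ (lt : V → V → Prop) :
    maxSet (fun a b => lt a b ∧ ¬(a ∈ layer lt 1 ∧ b ∈ layer lt 0)) Set.univ
      = layer lt 0 ∪ layer lt 1 := by
  ext u
  rw [mem_maxSet]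
  constructor
  · rintro ⟨-, hmax⟩
    by_cases h0 : u ∈ layer lt 0
    · exact Or.inl h0
    by_cases h1 : u ∈ layer lt 1
    · exact Or.inr h1
    exfalso
    have hu1 : u ∈ rest lt 1 := ⟨Set.mem_univ u, h0⟩
    have : ¬ ∀ v ∈ rest lt 1, ¬ lt u v := fun hall => h1 ⟨hu1, hall⟩
    push_neg at this
    obtain ⟨v, hv, hltv⟩ := this
    exact hmax v (Set.mem_univ v) ⟨hltv, fun hp => h1 hp.1⟩
  · intro h
    refine ⟨Set.mem_univ u, fun v _ hv => ?_⟩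
    rcases h with h0 | h1
    · exact h0.2 v (Set.mem_univ v) hv.1
    · have hv0 : v ∉ layer lt 0 := fun hv0 => hv.2 ⟨h1, hv0⟩
      exact h1.2 v ⟨Set.mem_univ v, hv0⟩ hv.1

lemma rest_restr (lt : V → V → Prop) (k : ℕ) :
    rest (fun a b => lt a b ∧ ¬(a ∈ layer lt 1 ∧ b ∈ layer lt 0)) (k+1) = rest lt (k+2) := by
  induction k with
  | zero =>
    show Set.univ \ maxSet _ Set.univ = rest lt 1 \ maxSet lt (rest lt 1)
    rw [maxSet_restr_univ, rest_one]
    show _ = (Set.univ \ layer lt 0) \ layer lt 1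
    rw [Set.diff_diff]
  | succ n ih =>
    show rest _ (n+1) \ maxSet _ (rest _ (n+1)) = rest lt (n+2) \ maxSet lt (rest lt (n+2))
    rw [ih]
    congr 1
    apply maxSet_eq_of_iff
    intro u _ v hv
    have hv0 : v ∉ layer lt 0 :=
      fun h0 => (rest_subset_of_le lt (by omega : 1 ≤ n+2) hv).2 h0
    constructor
    · exact fun hp => hp.1
    · exact fun hlt => ⟨hlt, fun hp => hv0 hp.2⟩

lemma cumul_restr (lt : V → V → Prop) (k : ℕ) :
    cumul (fun a b => lt a b ∧ ¬(a ∈ layer lt 1 ∧ b ∈ layer lt 0)) k = cumul lt (k+1) := by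
  unfold cumul
  rw [rest_restr]

lemma restStar_one (lt'' : V → V → Prop) (L0 : Set V) :
    rest (fun a b => a ∉ L0 ∧ (b ∈ L0 ∨ lt'' a b)) 1 ⊆ L0ᶜ := by
  intro u hu hu0
  exact hu.2 ⟨Set.mem_univ u, fun v _ hlt => hlt.1 hu0⟩

lemma restStar_subset (lt'' : V → V → Prop) (L0 : Set V) (k : ℕ) :
    rest (fun a b => a ∉ L0 ∧ (b ∈ L0 ∨ lt'' a b)) (k+1) ⊆ rest lt'' k := by
  induction k with
  | zero => exact fun u _ => Set.mem_univ u
  | succ n ih =>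
    intro u hu
    obtain ⟨hu1, hu2⟩ := hu
    refine ⟨ih hu1, ?_⟩
    have : ¬ ∀ v ∈ rest (fun a b => a ∉ L0 ∧ (b ∈ L0 ∨ lt'' a b)) (n+1),
        ¬ (u ∉ L0 ∧ (v ∈ L0 ∨ lt'' u v)) := fun hall => hu2 ⟨hu1, hall⟩
    push_neg at this
    obtain ⟨v, hv, hlt⟩ := this
    have hv0 : v ∉ L0 :=
      restStar_one lt'' L0 (rest_subset_of_le _ (by omega : 1 ≤ n+1) hv)
    intro hmax
    exact hmax.2 v (ih hv) (hlt.2.resolve_left hv0)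

theorem max_delayed_causal_restriction {V : Type*} [Fintype V] (G : SimpleGraph V)
    (I O : Set V) (g : V → V) (lt : V → V → Prop)
    (h : MaxDelayedCausalFlow G I O g lt) :
    MaxDelayedCausalFlow G I (O ∪ layer lt 1) g
      (fun a b => lt a b ∧ ¬(a ∈ layer lt 1 ∧ b ∈ layer lt 0)) := by
  classical
  obtain ⟨⟨hspo, hI, hlt, hadj, hadji⟩, hmax⟩ := h
  -- layer 0 is contained in O
  have hL0O : layer lt 0 ⊆ O := by
    intro u hu
    by_contra huO
    exact hu.2 (g u) (Set.mem_univ _) (hlt u huO)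
  constructor
  · -- the restriction is a causal flow of (G, I, O ∪ layer lt 1)
    refine ⟨⟨fun a ha => hspo.1 a ha.1,
        fun a b c hab hbc => ⟨hspo.2 a b c hab.1 hbc.1, ?_⟩⟩, ?_, ?_, ?_, ?_⟩
    · rintro ⟨ha1, hc0⟩
      have hb0 : b ∉ layer lt 0 := fun hb0 => hab.2 ⟨ha1, hb0⟩
      have hb1 : b ∈ rest lt 1 := ⟨Set.mem_univ b, hb0⟩
      exact ha1.2 b hb1 hab.1
    · exact fun i hi => hI i (fun hO => hi (Or.inl hO))
    · intro i hi
      exact ⟨hlt i (fun hO => hi (Or.inl hO)), fun hp => hi (Or.inr hp.1)⟩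
    · intro i hi j hj
      rcases hadj i (fun hO => hi (Or.inl hO)) j hj with he | hl
      · exact Or.inl he
      · exact Or.inr ⟨hl, fun hp => hi (Or.inr hp.1)⟩
    · exact fun i hi => hadji i (fun hO => hi (Or.inl hO))
  · -- maximality
    intro g'' lt'' hf md
    set L0 := layer lt 0 with hL0def
    set L1 := layer lt 1 with hL1def
    obtain ⟨hspo'', hI'', hlt'', hadj'', hadji''⟩ := hf
    -- build the extended flow of (G, I, O)
    set ltS : V → V → Prop := fun a b => a ∉ L0 ∧ (b ∈ L0 ∨ lt'' a b) with hltS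
    set gS : V → V := fun i => if i ∈ L1 then g i else g'' i with hgS
    have hflowS : IsCausalFlow G I O gS ltS := by
      refine ⟨⟨fun a ha => ?_, fun a b c hab hbc => ?_⟩, ?_, ?_, ?_, ?_⟩
      · rcases ha.2 with h0 | hl
        · exact ha.1 h0
        · exact hspo''.1 a hl
      · refine ⟨hab.1, ?_⟩
        have hab'' : lt'' a b := hab.2.resolve_left hbc.1
        rcases hbc.2 with h0 | hl
        · exact Or.inl h0
        · exact Or.inr (hspo''.2 a b c hab'' hl)
      · intro i hiO
        by_cases hi1 : i ∈ L1
        · simpa [hgS, hi1] using hI i hiO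
        · simpa [hgS, hi1] using hI'' i (fun hc => hc.elim hiO hi1)
      · intro i hiO
        have hi0 : i ∉ L0 := fun hi0 => hiO (hL0O hi0)
        by_cases hi1 : i ∈ L1
        · -- g i ∈ L0 since i is maximal in rest lt 1
          have hgi0 : g i ∈ L0 := by
            by_contra hg0
            exact hi1.2 (g i) ⟨Set.mem_univ _, hg0⟩ (hlt i hiO)
          exact ⟨hi0, Or.inl (by simpa [hgS, hi1] using hgi0)⟩
        · refine ⟨hi0, Or.inr ?_⟩
          simpa [hgS, hi1] using hlt'' i (fun hc => hc.elim hiO hi1)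
      · intro i hiO j hj
        have hi0 : i ∉ L0 := fun hi0 => hiO (hL0O hi0)
        by_cases hi1 : i ∈ L1
        · rw [hgS] at hj
          simp only [hi1, if_pos] at hj
          rcases hadj i hiO j hj with he | hl
          · exact Or.inl he
          · refine Or.inr ⟨hi0, Or.inl ?_⟩
            by_contra hj0
            exact hi1.2 j ⟨Set.mem_univ _, hj0⟩ hl
        · rw [hgS] at hj
          simp only [hi1, if_neg, if_false] at hj
          rcases hadj'' i (fun hc => hc.elim hiO hi1) j hj with he | hl
          · exact Or.inl he
          · exact Or.inr ⟨hi0, Or.inr hl⟩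
      · intro i hiO
        by_cases hi1 : i ∈ L1
        · simpa [hgS, hi1] using hadji i hiO
        · simpa [hgS, hi1] using hadji'' i (fun hc => hc.elim hiO hi1)
    -- ltS is more delayed than lt : contradiction
    apply hmax gS ltS hflowS
    have key : ∀ k, (cumul lt'' k) ⊆ cumul ltS (k+1) := by
      intro k
      exact Set.diff_subset_diff_right (restStar_subset lt'' L0 (k+1))
    have hc0 : cumul lt 0 ⊆ cumul ltS 0 := by
      intro u hu
      have hu0 : u ∈ L0 := by
        rcases hu with ⟨_, hu2⟩
        by_contra h0
        exact hu2 ⟨Set.mem_univ u, h0⟩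
      exact ⟨Set.mem_univ u, fun hr => restStar_one lt'' L0 hr hu0⟩
    constructor
    · intro k
      cases k with
      | zero => exact Set.ncard_le_ncard hc0 (Set.toFinite _)
      | succ n =>
        calc (cumul lt (n+1)).ncard = (cumul (fun a b => lt a b ∧ ¬(a ∈ L1 ∧ b ∈ L0)) n).ncard := by
              rw [cumul_restr]
          _ ≤ (cumul lt'' n).ncard := md.1 n
          _ ≤ (cumul ltS (n+1)).ncard := Set.ncard_le_ncard (key n) (Set.toFinite _)
    · obtain ⟨k, hk⟩ := md.2
      refine ⟨k+1, ?_⟩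
      calc (cumul lt (k+1)).ncard = (cumul (fun a b => lt a b ∧ ¬(a ∈ L1 ∧ b ∈ L0)) k).ncard := by
            rw [cumul_restr]
        _ < (cumul lt'' k).ncard := hk
        _ ≤ (cumul ltS (k+1)).ncard := Set.ncard_le_ncard (key k) (Set.toFinite _)
end

section
/- Let (G,I,O) be an open graph admitting a gflow, and suppose V ≠ O. Then there exists a non-output vertex u and a set K ⊆ O∖I with Odd(K) ∩ (V∖O) = {u}. In other words, if no non-output vertex can be corrected using only output vertices, then V = O or no gflow exists. -/
open Set

variable {V : Type*}

/-! Take a non-output vertex `u` that is maximal for the gflow order among non-outputs; it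
exists because a strict partial order on a finite set has maximal elements. Every vertex of
`g u` and of `oddN G (g u) \ {u}` lies strictly above `u`, hence is an output, so `K = g u`
works. -/

theorem IsSPO.exists_maximal [Finite V] {lt : V → V → Prop} (hlt : IsSPO lt)
    {S : Set V} (hS : S.Nonempty) : ∃ u ∈ S, ∀ v ∈ S, ¬ lt u v :=
  haveI : Std.Irrefl (flip lt) := ⟨hlt.1⟩
  haveI : IsTrans V (flip lt) := ⟨fun a b c hab hbc => hlt.2 c b a hbc hab⟩
  (Finite.wellFounded_of_trans_of_irrefl (flip lt)).has_min S hS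

section GFlow

variable {G : SimpleGraph V} {I O : Set V} {g : V → Set V} {lt : V → V → Prop}
  {u : V}

theorem IsGFlow.subset_diff_of_maximal (hflow : IsGFlow G I O g lt) (hu : u ∉ O)
    (hmax : ∀ v ∉ O, ¬ lt u v) : g u ⊆ O \ I := fun j hj =>
  ⟨by_contra fun hjO => hmax j hjO (hflow.2.2.1 u hu j hj),
    fun hjI => eq_empty_iff_forall_notMem.mp (hflow.2.1 u hu).2 j ⟨hj, hjI⟩⟩

theorem IsGFlow.oddN_inter_compl_eq_singleton_of_maximal (hflow : IsGFlow G I O g lt)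
    (hu : u ∉ O) (hmax : ∀ v ∉ O, ¬ lt u v) : oddN G (g u) ∩ Oᶜ = {u} := by
  ext j
  constructor
  · rintro ⟨hjodd, hjO⟩
    exact (hflow.2.2.2.1 u hu j hjodd).resolve_right (hmax j hjO)
  · rintro rfl
    exact ⟨hflow.2.2.2.2 j hu, hu⟩

end GFlow

theorem gflow_correctable_vertex {V : Type*} [Fintype V] (G : SimpleGraph V)
    (I O : Set V) (h : ∃ (g : V → Set V) (lt : V → V → Prop), IsGFlow G I O g lt)
    (hVO : (Set.univ : Set V) ≠ O) :
    ∃ u, u ∉ O ∧ ∃ K ⊆ O \ I, oddN G K ∩ Oᶜ = {u} := by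
  obtain ⟨g, lt, hflow⟩ := h
  have hnonout : Oᶜ.Nonempty := nonempty_compl.mpr (Ne.symm hVO)
  obtain ⟨u, hu, hmax⟩ := hflow.1.exists_maximal hnonout
  exact ⟨u, hu, g u, hflow.subset_diff_of_maximal hu hmax,
    hflow.oddN_inter_compl_eq_singleton_of_maximal hu hmax⟩
end

section
/- Let (G,I,O) be an open graph admitting a causal flow, and suppose V ≠ O. Then there exists v ∈ O∖I whose neighborhood intersected with V∖O is a singleton {u}; equivalently, some output vertex can serve as the corrector of exactly one unmeasured vertex. -/
open Set

variable {V : Type*}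

/-!
Take `u` maximal for `≺` among the non-outputs. Since `u ≺ g u`, the corrector `g u` must be an
output, and every non-output neighbour `j ≠ u` of `g u` would satisfy `u ≺ j`, contradicting
maximality; so `u` is the only non-output neighbour of `g u`.
-/

theorem IsSPO.maxSet_nonempty_s14 [Finite V] {lt : V → V → Prop} (hlt : IsSPO lt) {s : Set V}
    (hs : s.Nonempty) : (maxSet lt s).Nonempty := by
  have : IsTrans V (Function.swap lt) := ⟨fun a b c hab hbc => hlt.2 c b a hbc hab⟩
  have : Std.Irrefl (Function.swap lt) := ⟨hlt.1⟩
  obtain ⟨u, hu, hmax⟩ := (Finite.wellFounded_of_trans_of_irrefl (Function.swap lt)).has_min s hs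
  exact ⟨u, hu, hmax⟩

namespace IsCausalFlow

variable {G : SimpleGraph V} {I O : Set V} {g : V → V} {lt : V → V → Prop} {u : V}

theorem map_mem_of_mem_maxSet (hf : IsCausalFlow G I O g lt) (hu : u ∈ maxSet lt Oᶜ) :
    g u ∈ O := by
  by_contra hgu
  exact hu.2 (g u) hgu (hf.2.2.1 u hu.1)

theorem neighborSet_map_inter_compl_of_mem_maxSet (hf : IsCausalFlow G I O g lt)
    (hu : u ∈ maxSet lt Oᶜ) : G.neighborSet (g u) ∩ Oᶜ = {u} := by
  ext j
  constructor
  · rintro ⟨hadj, hj⟩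
    exact (hf.2.2.2.1 u hu.1 j hadj).resolve_right (hu.2 j hj)
  · rintro rfl
    exact ⟨hf.2.2.2.2 j hu.1, hu.1⟩

end IsCausalFlow

theorem causal_flow_correctable_vertex {V : Type*} [Fintype V] (G : SimpleGraph V)
    (I O : Set V) (h : ∃ (g : V → V) (lt : V → V → Prop), IsCausalFlow G I O g lt)
    (hVO : (Set.univ : Set V) ≠ O) :
    ∃ v ∈ O \ I, ∃ u, G.neighborSet v ∩ Oᶜ = {u} := by
  obtain ⟨g, lt, hf⟩ := h
  have hO : (Oᶜ : Set V).Nonempty := nonempty_compl.mpr hVO.symm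
  obtain ⟨u, hu⟩ := hf.1.maxSet_nonempty_s14 hO
  exact ⟨g u, ⟨hf.map_mem_of_mem_maxSet hu, hf.2.1 u hu.1⟩, u,
    hf.neighborSet_map_inter_compl_of_mem_maxSet hu⟩
end

section
/- Let (G,I,O) be an open graph and define the sequence of sets S₀ = O, S_{k+1} = S_k ∪ { u ∈ V∖S_k : ∃K ⊆ S_k∖I, Odd(K) ∩ (V∖S_k) = {u} }. Then (G,I,O) has a gflow if and only if S_k = V for some k ≤ |V|. -/
open Set

variable {V : Type*}

def Sseq (G : SimpleGraph V) (I O : Set V) : ℕ → Set V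
  | 0 => O
  | k+1 => Sseq G I O k ∪
      {u | u ∉ Sseq G I O k ∧ ∃ K ⊆ Sseq G I O k \ I, oddN G K ∩ (Sseq G I O k)ᶜ = {u}}

lemma Sseq_mono (G : SimpleGraph V) (I O : Set V) : Monotone (Sseq G I O) := by
  apply monotone_nat_of_le_succ
  intro k
  exact Set.subset_union_left

lemma oddN_empty (G : SimpleGraph V) : oddN G (∅ : Set V) = ∅ := by
  ext u
  simp [oddN, Nat.odd_iff]

lemma dir1 (G : SimpleGraph V) (I O : Set V) (N : ℕ)
    (hN : Sseq G I O N = Set.univ) :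
    ∃ (g : V → Set V) (lt : V → V → Prop), IsGFlow G I O g lt := by
  classical
  set rank : V → ℕ := fun u => sInf {k | u ∈ Sseq G I O k} with hrank
  have hmem : ∀ u, u ∈ Sseq G I O (rank u) := by
    intro u
    have h1 : ({k | u ∈ Sseq G I O k}).Nonempty :=
      ⟨N, by rw [Set.mem_setOf_eq, hN]; trivial⟩
    exact Nat.sInf_mem h1
  have hle : ∀ u k, u ∈ Sseq G I O k → rank u ≤ k := fun u k hu => Nat.sInf_le hu
  have key : ∀ i, i ∉ O → ∃ K : Set V, K ⊆ Sseq G I O (rank i - 1) \ I ∧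
      oddN G K ∩ (Sseq G I O (rank i - 1))ᶜ = {i} := by
    intro i hi
    have h0 : rank i ≠ 0 := by
      intro h0
      have := hmem i
      rw [h0] at this
      exact hi this
    obtain ⟨m, hm⟩ := Nat.exists_eq_succ_of_ne_zero h0
    have h1 : i ∈ Sseq G I O (m + 1) := by
      have := hmem i
      rwa [hm] at this
    have h2 : i ∉ Sseq G I O m := fun h => by
      have := hle i m h; omega
    rcases h1 with h1 | h1
    · exact absurd h1 h2
    · obtain ⟨-, K, hK1, hK2⟩ := h1
      refine ⟨K, ?_, ?_⟩
      · rw [hm]; simpa using hK1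
      · rw [hm]; simpa using hK2
  set g : V → Set V := fun i =>
    if h : i ∈ O then ∅ else (key i h).choose with hg
  have hgspec : ∀ i (h : i ∉ O), g i ⊆ Sseq G I O (rank i - 1) \ I ∧
      oddN G (g i) ∩ (Sseq G I O (rank i - 1))ᶜ = {i} := by
    intro i h
    simp only [hg, dif_neg h]
    exact (key i h).choose_spec
  have hrankpos : ∀ i, i ∉ O → 1 ≤ rank i := by
    intro i hi
    by_contra h
    have h0 : rank i = 0 := by omega
    have := hmem i
    rw [h0] at this
    exact hi this
  have hltg : ∀ i, i ∉ O → ∀ j ∈ g i, rank j < rank i := by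
    intro i hi j hj
    have h1 := (hgspec i hi).1 hj
    have := hle j _ h1.1
    have := hrankpos i hi
    omega
  refine ⟨g, fun i j => rank j < rank i, ⟨fun a => lt_irrefl _,
    fun a b c h1 h2 => lt_trans h2 h1⟩, ?_, ?_, ?_, ?_⟩
  · intro i hi
    obtain ⟨hK1, hK2⟩ := hgspec i hi
    constructor
    · rcases Set.eq_empty_or_nonempty (g i) with he | hne
      · exfalso
        have : i ∈ oddN G (g i) ∩ (Sseq G I O (rank i - 1))ᶜ := by
          rw [hK2]; rfl
        rw [he, oddN_empty] at this
        exact this.1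
      · exact hne
    · ext x
      simp only [Set.mem_inter_iff, Set.mem_empty_iff_false, iff_false, not_and]
      intro hx
      exact (hK1 hx).2
  · intro i hi j hj
    exact hltg i hi j hj
  · intro i hi j hj
    obtain ⟨hK1, hK2⟩ := hgspec i hi
    by_cases hjS : j ∈ Sseq G I O (rank i - 1)
    · right
      have := hle j _ hjS
      have := hrankpos i hi
      omega
    · left
      have : j ∈ oddN G (g i) ∩ (Sseq G I O (rank i - 1))ᶜ := ⟨hj, hjS⟩
      rw [hK2] at this
      exact this
  · intro i hi
    have : i ∈ oddN G (g i) ∩ (Sseq G I O (rank i - 1))ᶜ := by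
      rw [(hgspec i hi).2]; rfl
    exact this.1

lemma exists_maximal_of_spo [Fintype V] {lt : V → V → Prop} (hspo : IsSPO lt)
    {T : Set V} (hT : T.Nonempty) : ∃ u ∈ T, ∀ v ∈ T, ¬ lt u v := by
  haveI : IsTrans V (fun a b => lt b a) := ⟨fun a b c h1 h2 => hspo.2 _ _ _ h2 h1⟩
  haveI : IsIrrefl V (fun a b => lt b a) := ⟨fun a => hspo.1 a⟩
  have hwf : WellFounded (fun a b : V => lt b a) :=
    Finite.wellFounded_of_trans_of_irrefl _
  obtain ⟨u, huT, hmin⟩ := hwf.has_min T hT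
  exact ⟨u, huT, fun v hv hlt => hmin v hv hlt⟩

lemma dir2 [Fintype V] (G : SimpleGraph V) (I O : Set V)
    (g : V → Set V) (lt : V → V → Prop) (hgf : IsGFlow G I O g lt) :
    Sseq G I O (Fintype.card V) = Set.univ := by
  obtain ⟨hspo, hg1, hg2, hg3, hg4⟩ := hgf
  have step : ∀ k, Sseq G I O k ≠ Set.univ → Sseq G I O k ⊂ Sseq G I O (k + 1) := by
    intro k hk
    have hT : ((Sseq G I O k)ᶜ).Nonempty := by
      rw [Set.nonempty_compl]; exact hk
    obtain ⟨u, huT, hmax⟩ := exists_maximal_of_spo hspo hT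
    have huO : u ∉ O := fun h => huT (Sseq_mono G I O (Nat.zero_le k) h)
    refine ⟨Set.subset_union_left, fun hsub => ?_⟩
    have hu1 : u ∈ Sseq G I O (k + 1) := by
      right
      refine ⟨huT, g u, ?_, ?_⟩
      · intro j hj
        have hjlt := hg2 u huO j hj
        have hjS : j ∈ Sseq G I O k := by
          by_contra hjT
          exact hmax j hjT hjlt
        refine ⟨hjS, ?_⟩
        intro hjI
        have := hg1 u huO
        have : j ∈ g u ∩ I := ⟨hj, hjI⟩
        rw [(hg1 u huO).2] at this
        exact this
      · ext x
        simp only [Set.mem_inter_iff, Set.mem_compl_iff, Set.mem_singleton_iff]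
        constructor
        · rintro ⟨hx1, hx2⟩
          rcases hg3 u huO x hx1 with h | h
          · exact h
          · exact absurd h (hmax x hx2)
        · intro hxu
          rw [hxu]
          exact ⟨hg4 u huO, huT⟩
    exact huT (hsub hu1)
  have grow : ∀ k, Sseq G I O k = Set.univ ∨ k ≤ (Sseq G I O k).ncard := by
    intro k
    induction k with
    | zero => right; omega
    | succ n ih =>
      rcases ih with h | h
      · left
        apply Set.eq_univ_of_univ_subset
        rw [← h]
        exact Sseq_mono G I O (Nat.le_succ n)
      · by_cases hn : Sseq G I O n = Set.univ
        · left
          apply Set.eq_univ_of_univ_subset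
          rw [← hn]
          exact Sseq_mono G I O (Nat.le_succ n)
        · right
          have := Set.ncard_lt_ncard (step n hn) (Set.toFinite _)
          omega
  rcases grow (Fintype.card V) with h | h
  · exact h
  · exact Set.eq_of_subset_of_ncard_le (Set.subset_univ _)
      (by rw [Set.ncard_univ, Nat.card_eq_fintype_card]; exact h) (Set.toFinite _)

theorem gflow_iff_Sseq_saturates {V : Type*} [Fintype V] (G : SimpleGraph V)
    (I O : Set V) :
    (∃ (g : V → Set V) (lt : V → V → Prop), IsGFlow G I O g lt) ↔
    ∃ k ≤ Fintype.card V, Sseq G I O k = Set.univ := by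
  constructor
  · rintro ⟨g, lt, hgf⟩
    exact ⟨Fintype.card V, le_refl _, dir2 G I O g lt hgf⟩
  · rintro ⟨k, -, hk⟩
    exact dir1 G I O k hk
end
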